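/- arXiv:1105.3375 — 5 statements merged into one kernel-verified Lean document; each statement's English description precedes it below -/
import Mathlib

section
/- For every natural number μ one has Γ(μ/2 + 1) ≤ 2^{−μ/2} · √(μ+1) · √(μ!), where Γ is the Gamma function. -/
/-!
With `s = (μ + 1)/2`, log-convexity of `Γ` at the midpoint of `s` and `s + 1` gives
`Γ(s + 1/2) ≤ √s Γ(s)`, so `Γ(s + 1/2)² ≤ √s Γ(s) Γ(s + 1/2)`, and Legendre's duplication formula
evaluates `Γ(s) Γ(s + 1/2) = 2^{-μ} √π μ!`. It remains to note `√(π s) ≤ μ + 1` for `μ ≥ 1`.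
-/

open Real

theorem Real.Gamma_midpoint_sq_le {s t : ℝ} (hs : 0 < s) (ht : 0 < t) :
    Gamma ((s + t) / 2) ^ 2 ≤ Gamma s * Gamma t := by
  have h := Gamma_mul_add_mul_le_rpow_Gamma_mul_rpow_Gamma hs ht one_half_pos one_half_pos
    (add_halves 1)
  rw [← mul_rpow (Gamma_pos_of_pos hs).le (Gamma_pos_of_pos ht).le, ← sqrt_eq_rpow,
    ← mul_add, one_div_mul_eq_div, div_eq_mul_inv] at h
  rw [div_eq_mul_inv]
  exact (le_sqrt' (Gamma_pos_of_pos (by positivity))).mp h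

theorem Real.Gamma_add_half_le_sqrt_mul_Gamma {s : ℝ} (hs : 0 < s) :
    Gamma (s + 1 / 2) ≤ √s * Gamma s := by
  have h := Gamma_midpoint_sq_le hs (add_pos hs one_pos)
  rw [Gamma_add_one hs.ne', show (s + (s + 1)) / 2 = s + 1 / 2 by ring,
    show Gamma s * (s * Gamma s) = (√s * Gamma s) ^ 2 by rw [mul_pow, sq_sqrt hs.le]; ring] at h
  exact le_of_sq_le_sq h (mul_nonneg (sqrt_nonneg s) (Gamma_pos_of_pos hs).le)

theorem Real.Gamma_div_two_add_one_sq_le {x : ℝ} (hx : -1 < x) :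
    Gamma (x / 2 + 1) ^ 2 ≤ √(π * (x + 1) / 2) * 2 ^ (-x) * Gamma (x + 1) := by
  set s := x / 2 + 1 / 2 with hs_def
  have hs : 0 < s := by rw [hs_def]; linarith
  have hdup := Gamma_mul_Gamma_add_half_of_pos hs
  rw [show 2 * s = x + 1 by ring, show 1 - (x + 1) = -x by ring] at hdup
  calc Gamma (x / 2 + 1) ^ 2 = Gamma (s + 1 / 2) * Gamma (s + 1 / 2) := by
        rw [sq, hs_def]; ring_nf
    _ ≤ √s * Gamma s * Gamma (s + 1 / 2) :=
        mul_le_mul_of_nonneg_right (Gamma_add_half_le_sqrt_mul_Gamma hs)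
          (Gamma_pos_of_pos (by linarith)).le
    _ = √(π * (x + 1) / 2) * 2 ^ (-x) * Gamma (x + 1) := by
        rw [mul_assoc, hdup, show π * (x + 1) / 2 = s * π by ring, sqrt_mul hs.le]; ring

/-- For every `μ ∈ ℕ`: `Γ(μ/2 + 1) ≤ 2^{−μ/2} · √(μ+1) · √(μ!)`. -/
theorem stmt_8 (μ : ℕ) :
    Real.Gamma ((μ : ℝ) / 2 + 1) ≤
      (2 : ℝ) ^ (-(μ : ℝ) / 2) * Real.sqrt ((μ : ℝ) + 1) *
        Real.sqrt (Nat.factorial μ) := by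
  rcases Nat.eq_zero_or_pos μ with rfl | hμ_pos
  · simp -- `√(π/2) > 1`, so the general bound is too weak at `μ = 0`
  have hμ : (1 : ℝ) ≤ μ := by exact_mod_cast hμ_pos
  have h := Gamma_div_two_add_one_sq_le (x := μ) (by linarith)
  rw [Gamma_nat_eq_factorial] at h
  have hπ : √(π * (μ + 1) / 2) ≤ μ + 1 := by
    rw [sqrt_le_left (by linarith)]; nlinarith [pi_le_four]
  have h2 : (2 : ℝ) ^ (-(μ : ℝ) / 2) = √(2 ^ (-(μ : ℝ))) := by
    rw [sqrt_eq_rpow, ← rpow_mul zero_le_two]; ring_nf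
  rw [h2, ← sqrt_mul (by positivity), ← sqrt_mul (by positivity)]
  refine le_sqrt_of_sq_le (h.trans ?_)
  rw [mul_comm (2 ^ _ : ℝ)]
  gcongr
end

section
/- Let n ≥ 1 and l ≥ 0 be integers and let λ ≥ 0 be an integer. Then Σ [ 1/((l₁+1)²(l₂+1)²·n₁²·n₂²) · n!/(n₁!·n₂!) · λ!/(λ₁!·λ₂!) · (n₁+l₁−1)!·(n₂+l₂−1)!/(n+l−1)! ] ≤ 20/((l+1)²·n²), where the sum runs over all integers l₁, l₂ ≥ 0 with l₁+l₂ = l, all integers n₁, n₂ ≥ 1 with n₁+n₂ = n+1, and all integers λ₁, λ₂ ≥ 0 with λ₁ ≤ l₁, λ₂ ≤ l₂ and λ₁+λ₂ = λ. -/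
/-!
Write `n₂ = n + 1 - n₁` and `l₂ = l - l₁`. Since `n ≤ n₁ n₂`, `n! / (n₁! n₂!) ≤ C(n-1, n₁-1)`, while
`(n₁+l₁-1)! (n₂+l₂-1)! / (n+l-1)! = 1 / C(n+l-1, n₁+l₁-1)`; by Vandermonde
`C(n-1, n₁-1) C(l, l₁) ≤ C(n+l-1, n₁+l₁-1)`, so each summand is at most
`C(λ, λ₁) / C(l, l₁)` times `1/((l₁+1)²(l₂+1)²)` and `1/(n₁² n₂²)`. Vandermonde again bounds the
`λ₁`-sum of `C(λ, λ₁)` by `C(l, l₁)`, and the remaining sum factorises into two sums of the form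
`∑_{i+j=m} 1/((i+1)²(j+1)²) ≤ 4/(m+1)²`, which follow from partial fractions together with
`∑ 1/k² ≤ π²/6 < 5/3` and a linear bound on the harmonic numbers. This gives `16 ≤ 20`.
-/

open Finset
open scoped Nat

theorem sum_range_inv_sq_le (m : ℕ) : ∑ k ∈ range m, 1 / ((k : ℝ) + 1) ^ 2 ≤ 5 / 3 := by
  have hzeta : ∑ k ∈ range (m + 1), 1 / (k : ℝ) ^ 2 ≤ Real.pi ^ 2 / 6 :=
    sum_le_hasSum _ (fun _ _ ↦ by positivity) hasSum_zeta_two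
  rw [sum_range_succ'] at hzeta
  have hpi : Real.pi ^ 2 < 3.15 ^ 2 := by gcongr; exact Real.pi_lt_d2
  push_cast at hzeta
  norm_num at hzeta hpi ⊢
  linarith

theorem sum_range_inv_le (m : ℕ) : ∑ k ∈ range m, 1 / ((k : ℝ) + 1) ≤ m / 6 + 3 / 2 := by
  induction m with
  | zero => norm_num
  | succ m ih =>
    rw [sum_range_succ]
    by_cases hm : 5 ≤ m
    · have : 1 / ((m : ℝ) + 1) ≤ 1 / 6 := by
        gcongr
        exact_mod_cast Nat.succ_le_succ hm
      push_cast
      linarith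
    · interval_cases m <;> norm_num [sum_range_succ]

theorem sum_antidiagonal_add {M : Type*} [NonAssocSemiring M] (g : ℕ → M) (m : ℕ) :
    ∑ ij ∈ antidiagonal m, (g ij.1 + g ij.2) = 2 * ∑ k ∈ range (m + 1), g k := by
  have hswap : ∑ ij ∈ antidiagonal m, g ij.2 = ∑ ij ∈ antidiagonal m, g ij.1 :=
    Nat.sum_antidiagonal_swap (f := fun ij ↦ g ij.1)
  rw [sum_add_distrib, hswap, ← two_mul, Nat.sum_antidiagonal_eq_sum_range_succ (fun i _ ↦ g i)]

theorem sum_antidiagonal_inv_sq_mul_inv_sq_le (m : ℕ) :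
    ∑ ij ∈ antidiagonal m, 1 / (((ij.1 : ℝ) + 1) ^ 2 * ((ij.2 : ℝ) + 1) ^ 2) ≤
      4 / ((m : ℝ) + 1) ^ 2 := by
  set M : ℝ := m + 2 with hM
  -- `1 / (a b) = (1 / a + 1 / b) / (a + b)`, squared
  have split : ∀ ij ∈ antidiagonal m, 1 / (((ij.1 : ℝ) + 1) ^ 2 * ((ij.2 : ℝ) + 1) ^ 2) =
      1 / M ^ 2 * (1 / ((ij.1 : ℝ) + 1) ^ 2 + 1 / ((ij.2 : ℝ) + 1) ^ 2) +
        2 / M ^ 3 * (1 / ((ij.1 : ℝ) + 1) + 1 / ((ij.2 : ℝ) + 1)) := by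
    rintro ⟨i, j⟩ hij
    obtain rfl : m = i + j := (mem_antidiagonal.1 hij).symm
    simp only [hM]
    push_cast
    field_simp
    ring
  rw [sum_congr rfl split, sum_add_distrib, ← mul_sum, ← mul_sum,
    sum_antidiagonal_add (fun k ↦ 1 / ((k : ℝ) + 1) ^ 2),
    sum_antidiagonal_add (fun k ↦ 1 / ((k : ℝ) + 1))]
  have hsq := sum_range_inv_sq_le (m + 1)
  have hinv := sum_range_inv_le (m + 1)
  calc 1 / M ^ 2 * (2 * ∑ k ∈ range (m + 1), 1 / ((k : ℝ) + 1) ^ 2) +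
        2 / M ^ 3 * (2 * ∑ k ∈ range (m + 1), 1 / ((k : ℝ) + 1))
      ≤ 1 / M ^ 2 * (2 * (5 / 3)) + 2 / M ^ 3 * (2 * ((m + 1 : ℕ) / 6 + 3 / 2)) := by
        gcongr
    _ ≤ 4 / ((m : ℝ) + 1) ^ 2 := by
        rw [hM]
        push_cast
        field_simp
        nlinarith [(m.cast_nonneg : (0 : ℝ) ≤ m)]

theorem sum_Icc_inv_sq_mul_inv_sq_le (n : ℕ) :
    ∑ n₁ ∈ Icc 1 n, 1 / ((n₁ : ℝ) ^ 2 * ((n + 1 - n₁ : ℕ) : ℝ) ^ 2) ≤ 4 / (n : ℝ) ^ 2 := by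
  cases n with
  | zero => simp
  | succ m =>
    convert sum_antidiagonal_inv_sq_mul_inv_sq_le m using 1
    · rw [← map_add_right_Icc 0 m 1, sum_map, Nat.sum_antidiagonal_eq_sum_range_succ
        (fun i j ↦ 1 / (((i : ℝ) + 1) ^ 2 * ((j : ℝ) + 1) ^ 2))]
      refine sum_congr (by ext; simp) fun k hk ↦ ?_
      have hkm : k ≤ m := Nat.lt_succ_iff.1 (mem_range.1 hk)
      simp only [addRightEmbedding_apply, Nat.cast_add, Nat.cast_one]
      rw [show m + 1 + 1 - (k + 1) = m - k + 1 by omega]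
      push_cast
      ring
    · push_cast
      ring

theorem choose_mul_choose_le_choose_add (p q i j : ℕ) :
    p.choose i * q.choose j ≤ (p + q).choose (i + j) := by
  rw [Nat.add_choose_eq]
  exact single_le_sum (f := fun ij : ℕ × ℕ ↦ p.choose ij.1 * q.choose ij.2)
    (fun _ _ ↦ Nat.zero_le _) (mem_antidiagonal.2 (rfl : (i, j).1 + (i, j).2 = i + j))

theorem factorial_le_choose_mul_factorial_mul_factorial (a b : ℕ) :
    (a + b + 1)! ≤ (a + b).choose a * ((a + 1)! * (b + 1)!) := by
  have hchoose : (a + b).choose a * a ! * b ! = (a + b)! := by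
    simpa using Nat.choose_mul_factorial_mul_factorial (Nat.le_add_right a b)
  calc (a + b + 1)! = (a + b + 1) * ((a + b).choose a * a ! * b !) := by
        rw [hchoose, Nat.factorial_succ]
    _ ≤ (a + 1) * (b + 1) * ((a + b).choose a * a ! * b !) := by
        gcongr
        nlinarith
    _ = (a + b).choose a * ((a + 1)! * (b + 1)!) := by
        rw [Nat.factorial_succ, Nat.factorial_succ]
        ring

theorem factorial_ratio_le_inv_choose (a b c d : ℕ) :
    ((a + b + 1)! : ℝ) / ((a + 1)! * (b + 1)!) * ((a + c)! * (b + d)! / (a + b + c + d)!) ≤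
      1 / (c + d).choose c := by
  have hvand : (a + b).choose a * (c + d).choose c ≤ (a + b + c + d).choose (a + c) := by
    have := choose_mul_choose_le_choose_add (a + b) (c + d) a c
    rwa [← add_assoc] at this
  have hcast : ((a + c)! * (b + d)! / (a + b + c + d)! : ℝ) =
      1 / (a + b + c + d).choose (a + c) := by
    rw [Nat.cast_choose ℝ (by omega), show a + b + c + d - (a + c) = b + d by omega, one_div_div]
  have hfirst : ((a + b + 1)! : ℝ) / ((a + 1)! * (b + 1)!) ≤ (a + b).choose a := by
    rw [div_le_iff₀ (by positivity)]
    exact_mod_cast factorial_le_choose_mul_factorial_mul_factorial a b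
  have hpos : (0 : ℝ) < (a + b + c + d).choose (a + c) := by
    exact_mod_cast Nat.choose_pos (by omega)
  rw [hcast]
  calc ((a + b + 1)! : ℝ) / ((a + 1)! * (b + 1)!) * (1 / (a + b + c + d).choose (a + c))
      ≤ (a + b).choose a * (1 / (a + b + c + d).choose (a + c)) := by gcongr
    _ ≤ 1 / (c + d).choose c := by
        rw [mul_one_div, div_le_div_iff₀ hpos (by exact_mod_cast Nat.choose_pos (by omega)),
          one_mul]
        exact_mod_cast hvand

theorem sum_filter_choose_le_choose (l lam l₁ : ℕ) (hl₁ : l₁ ≤ l) :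
    ∑ lam₁ ∈ range (lam + 1) with lam₁ ≤ l₁ ∧ lam - lam₁ ≤ l - l₁, lam.choose lam₁ ≤
      l.choose l₁ := by
  rcases lt_or_ge l lam with hlt | hle
  · rw [sum_eq_zero fun lam₁ h ↦ by simp at h; omega]
    exact Nat.zero_le _
  calc ∑ lam₁ ∈ range (lam + 1) with lam₁ ≤ l₁ ∧ lam - lam₁ ≤ l - l₁, lam.choose lam₁
      ≤ ∑ lam₁ ∈ range (lam + 1) with lam₁ ≤ l₁ ∧ lam - lam₁ ≤ l - l₁,
          lam.choose lam₁ * (l - lam).choose (l₁ - lam₁) := by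
        gcongr with lam₁ h
        simp only [mem_filter, mem_range] at h
        exact Nat.le_mul_of_pos_right _ (Nat.choose_pos (by omega))
    _ ≤ ∑ lam₁ ∈ range (l₁ + 1), lam.choose lam₁ * (l - lam).choose (l₁ - lam₁) :=
        sum_le_sum_of_subset fun lam₁ h ↦ by simp only [mem_filter, mem_range] at h ⊢; omega
    _ = l.choose l₁ := by
        rw [← Nat.sum_antidiagonal_eq_sum_range_succ (fun i j ↦ lam.choose i * (l - lam).choose j),
          ← Nat.add_choose_eq, Nat.add_sub_cancel' hle]

theorem sum_ite_choose_div_choose_le_one (l lam l₁ : ℕ) (hl₁ : l₁ ≤ l) :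
    ∑ lam₁ ∈ range (lam + 1),
      (if lam₁ ≤ l₁ ∧ lam - lam₁ ≤ l - l₁ then (lam.choose lam₁ : ℝ) / l.choose l₁ else 0) ≤ 1 := by
  rw [← sum_filter, ← sum_div, div_le_one (by exact_mod_cast Nat.choose_pos hl₁)]
  exact_mod_cast sum_filter_choose_le_choose l lam l₁ hl₁

theorem summand_le_weight_mul_choose_div_choose (n l lam l₁ n₁ lam₁ : ℕ) (hl₁ : l₁ ≤ l)
    (hn₁ : n₁ ∈ Icc 1 n) (hlam₁ : lam₁ ≤ lam) :
    (if lam₁ ≤ l₁ ∧ lam - lam₁ ≤ l - l₁ then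
        (1 : ℝ) / (((l₁ : ℝ) + 1) ^ 2 * ((l - l₁ : ℕ) + 1) ^ 2 * (n₁ : ℝ) ^ 2 *
            ((n + 1 - n₁ : ℕ) : ℝ) ^ 2) *
          ((n ! : ℝ) / ((n₁ ! : ℝ) * ((n + 1 - n₁)! : ℝ))) *
          ((lam ! : ℝ) / ((lam₁ ! : ℝ) * ((lam - lam₁)! : ℝ))) *
          (((n₁ + l₁ - 1)! : ℝ) * (((n + 1 - n₁) + (l - l₁) - 1)! : ℝ) / ((n + l - 1)! : ℝ))
      else 0) ≤
      1 / (((l₁ : ℝ) + 1) ^ 2 * (((l - l₁ : ℕ) : ℝ) + 1) ^ 2) *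
        (1 / ((n₁ : ℝ) ^ 2 * ((n + 1 - n₁ : ℕ) : ℝ) ^ 2) *
          (if lam₁ ≤ l₁ ∧ lam - lam₁ ≤ l - l₁ then (lam.choose lam₁ : ℝ) / l.choose l₁
            else 0)) := by
  split_ifs
  case neg => simp
  obtain ⟨a, rfl⟩ : ∃ a, n₁ = a + 1 := ⟨n₁ - 1, by grind⟩
  obtain ⟨b, rfl⟩ : ∃ b, n = a + b + 1 := ⟨n - (a + 1), by grind⟩
  obtain ⟨d, rfl⟩ : ∃ d, l = l₁ + d := ⟨l - l₁, by omega⟩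
  have hratio := factorial_ratio_le_inv_choose a b l₁ d
  rw [show a + b + 1 + 1 - (a + 1) = b + 1 by omega, show l₁ + d - l₁ = d by omega,
    show a + 1 + l₁ - 1 = a + l₁ by omega, show b + 1 + d - 1 = b + d by omega,
    show a + b + 1 + (l₁ + d) - 1 = a + b + l₁ + d by omega, ← Nat.cast_choose ℝ hlam₁]
  calc _ = 1 / (((l₁ : ℝ) + 1) ^ 2 * ((d : ℝ) + 1) ^ 2) * (1 / (((a + 1 : ℕ) : ℝ) ^ 2 *
          ((b + 1 : ℕ) : ℝ) ^ 2) * (lam.choose lam₁ * (((a + b + 1)! : ℝ) / ((a + 1)! * (b + 1)!) *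
          ((a + l₁)! * (b + d)! / (a + b + l₁ + d)!)))) := by
        simp only [div_eq_mul_inv, one_mul, mul_inv]
        ring
    _ ≤ _ := by
        rw [div_eq_mul_one_div (lam.choose lam₁ : ℝ)]
        gcongr

theorem stmt_10_general (n l lam : ℕ) :
    ∑ l₁ ∈ Finset.range (l + 1), ∑ n₁ ∈ Finset.Icc 1 n, ∑ lam₁ ∈ Finset.range (lam + 1),
        (if lam₁ ≤ l₁ ∧ lam - lam₁ ≤ l - l₁ then
          (1 : ℝ) /
              (((l₁ : ℝ) + 1) ^ 2 * ((l - l₁ : ℕ) + 1) ^ 2 * (n₁ : ℝ) ^ 2 *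
                ((n + 1 - n₁ : ℕ) : ℝ) ^ 2) *
            ((Nat.factorial n : ℝ) /
              ((Nat.factorial n₁ : ℝ) * (Nat.factorial (n + 1 - n₁) : ℝ))) *
            ((Nat.factorial lam : ℝ) /
              ((Nat.factorial lam₁ : ℝ) * (Nat.factorial (lam - lam₁) : ℝ))) *
            ((Nat.factorial (n₁ + l₁ - 1) : ℝ) *
                (Nat.factorial ((n + 1 - n₁) + (l - l₁) - 1) : ℝ) /
              (Nat.factorial (n + l - 1) : ℝ))
        else 0) ≤
      20 / (((l : ℝ) + 1) ^ 2 * (n : ℝ) ^ 2) := by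
  calc _ ≤ ∑ l₁ ∈ range (l + 1), 1 / (((l₁ : ℝ) + 1) ^ 2 * (((l - l₁ : ℕ) : ℝ) + 1) ^ 2) *
          ∑ n₁ ∈ Icc 1 n, 1 / ((n₁ : ℝ) ^ 2 * ((n + 1 - n₁ : ℕ) : ℝ) ^ 2) *
            ∑ lam₁ ∈ range (lam + 1), (if lam₁ ≤ l₁ ∧ lam - lam₁ ≤ l - l₁ then
              (lam.choose lam₁ : ℝ) / l.choose l₁ else 0) := by
        simp only [mul_sum]
        gcongr with l₁ hl₁ n₁ hn₁ lam₁ hlam₁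
        exact summand_le_weight_mul_choose_div_choose n l lam l₁ n₁ lam₁
          (mem_range_succ_iff.1 hl₁) hn₁ (mem_range_succ_iff.1 hlam₁)
    _ ≤ (∑ l₁ ∈ range (l + 1), 1 / (((l₁ : ℝ) + 1) ^ 2 * (((l - l₁ : ℕ) : ℝ) + 1) ^ 2)) *
          ∑ n₁ ∈ Icc 1 n, 1 / ((n₁ : ℝ) ^ 2 * ((n + 1 - n₁ : ℕ) : ℝ) ^ 2) := by
        rw [sum_mul]
        gcongr with l₁ hl₁
        exact mul_le_of_le_one_right (by positivity)
          (sum_ite_choose_div_choose_le_one l lam l₁ (mem_range_succ_iff.1 hl₁))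
    _ ≤ 4 / ((l : ℝ) + 1) ^ 2 * (4 / (n : ℝ) ^ 2) := by
        rw [← Nat.sum_antidiagonal_eq_sum_range_succ
          (fun i j ↦ 1 / (((i : ℝ) + 1) ^ 2 * ((j : ℝ) + 1) ^ 2))]
        gcongr
        · exact sum_antidiagonal_inv_sq_mul_inv_sq_le l
        · exact sum_Icc_inv_sq_mul_inv_sq_le n
    _ ≤ 20 / (((l : ℝ) + 1) ^ 2 * (n : ℝ) ^ 2) := by
        rw [div_mul_div_comm]
        gcongr
        norm_num

/-- Combinatorial flow-equation inequality (eq. (1) of the paper): for integers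
`n ≥ 1`, `l ≥ 0`, `λ ≥ 0`, the sum over all `l₁+l₂ = l` (`l₁,l₂ ≥ 0`),
`n₁+n₂ = n+1` (`n₁,n₂ ≥ 1`), `λ₁+λ₂ = λ` with `λ₁ ≤ l₁`, `λ₂ ≤ l₂`, of
`1/((l₁+1)²(l₂+1)²n₁²n₂²) · n!/(n₁!n₂!) · λ!/(λ₁!λ₂!) ·
(n₁+l₁−1)!(n₂+l₂−1)!/(n+l−1)!` is at most `20/((l+1)²n²)`.
Here `l₂ = l − l₁`, `n₂ = n+1 − n₁`, `λ₂ = λ − λ₁`. -/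
theorem stmt_10 (n l lam : ℕ) (hn : 1 ≤ n) :
    ∑ l₁ ∈ Finset.range (l + 1), ∑ n₁ ∈ Finset.Icc 1 n, ∑ lam₁ ∈ Finset.range (lam + 1),
        (if lam₁ ≤ l₁ ∧ lam - lam₁ ≤ l - l₁ then
          (1 : ℝ) /
              (((l₁ : ℝ) + 1) ^ 2 * ((l - l₁ : ℕ) + 1) ^ 2 * (n₁ : ℝ) ^ 2 *
                ((n + 1 - n₁ : ℕ) : ℝ) ^ 2) *
            ((Nat.factorial n : ℝ) /
              ((Nat.factorial n₁ : ℝ) * (Nat.factorial (n + 1 - n₁) : ℝ))) *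
            ((Nat.factorial lam : ℝ) /
              ((Nat.factorial lam₁ : ℝ) * (Nat.factorial (lam - lam₁) : ℝ))) *
            ((Nat.factorial (n₁ + l₁ - 1) : ℝ) *
                (Nat.factorial ((n + 1 - n₁) + (l - l₁) - 1) : ℝ) /
              (Nat.factorial (n + l - 1) : ℝ))
        else 0) ≤
      20 / (((l : ℝ) + 1) ^ 2 * (n : ℝ) ^ 2) :=
  stmt_10_general n l lam
end

section
/- Let m > 0, 0 < Λ ≤ Λ₀, let s ≥ 1 and l ≥ 1 be integers, and let P ≥ 0 be a real number. Writing κ' := max(Λ', m) and κ := max(Λ, m), one has Σ_{λ=0}^{l−1} (1/(2^λ·λ!)) ∫_Λ^{Λ₀} Λ'^{−s−1} · [ log^λ(max(P/κ', κ'/m)) + √(λ!) ] dΛ' ≤ 5 · (Λ^{−s}/s) · Σ_{λ=0}^{l−1} (1/(2^λ·λ!)) · log^λ(max(P/κ, κ/m)). -/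
/-!
For `t ≥ Λ` the argument `max (P/κ', κ'/m)` of the logarithm grows at most like `t/Λ`, so its
logarithm exceeds the value at `Λ` by at most `log (t/Λ)`. The weights `1/(2^λ λ!)` are the
Taylor coefficients of `exp (x/2)`, hence shifting `x` by `u` costs at most a factor
`exp (u/2) = (t/Λ)^{1/2}` in the truncated sums, while the `√λ!` terms add up to at most `2`.
With `S ≥ 1` the sum on the right, the integrand is therefore at most
`(S (t/Λ)^{1/2} + 2) t^{-s-1}`, whose integral over `[Λ, ∞)` is
`S Λ^{-s}/(s - 1/2) + 2 Λ^{-s}/s ≤ 4 S Λ^{-s}/s`.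
-/

open Finset Real intervalIntegral
open scoped Nat

theorem add_pow_div_factorial {K : Type*} [Field K] [CharZero K] (a b : K) (n : ℕ) :
    (a + b) ^ n / n ! = ∑ k ∈ range (n + 1), a ^ k / k ! * (b ^ (n - k) / (n - k)!) := by
  rw [add_pow, sum_div]
  refine sum_congr rfl fun k hk => ?_
  rw [Nat.cast_choose K (Nat.le_of_lt_succ (mem_range.1 hk))]
  have : (n ! : K) ≠ 0 := Nat.cast_ne_zero.2 n.factorial_ne_zero
  field_simp

theorem sum_range_add_pow_div_factorial_le {a b : ℝ} (ha : 0 ≤ a) (hb : 0 ≤ b) (l : ℕ) :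
    ∑ n ∈ range l, (a + b) ^ n / n ! ≤ (∑ k ∈ range l, a ^ k / k !) * exp b := by
  simp_rw [add_pow_div_factorial]
  rw [sum_range_diag_flip l fun k j => a ^ k / k ! * (b ^ j / j !), sum_mul]
  gcongr with k
  rw [← mul_sum]
  gcongr
  exact sum_le_exp_of_nonneg hb _

theorem integral_rpow_le_of_lt_neg_one {a b r : ℝ} (ha : 0 < a) (hab : a ≤ b) (hr : r < -1) :
    ∫ t in a..b, t ^ r ≤ a ^ (r + 1) / -(r + 1) := by
  have h0 : (0 : ℝ) ∉ Set.uIcc a b := Set.notMem_uIcc_of_lt ha (ha.trans_le hab)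
  rw [integral_rpow (Or.inr ⟨hr.ne, h0⟩), ← neg_div_neg_eq, neg_sub]
  have := rpow_nonneg (ha.le.trans hab) (r + 1)
  exact div_le_div_of_nonneg_right (by linarith) (by linarith)

theorem intervalIntegrable_div_pow_of_continuousOn {g : ℝ → ℝ} {a b : ℝ} (ha : 0 < a) (hab : a ≤ b)
    (hg : ContinuousOn g (Set.Icc a b)) (n : ℕ) :
    IntervalIntegrable (fun t => g t / t ^ n) MeasureTheory.volume a b := by
  refine ContinuousOn.intervalIntegrable ?_
  rw [Set.uIcc_of_le hab]
  exact hg.div (continuousOn_pow n) fun t ht => pow_ne_zero n (ha.trans_le ht.1).ne'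

noncomputable def expHalfPartialSum (l : ℕ) (x : ℝ) : ℝ :=
  ∑ k ∈ range l, 1 / ((2 : ℝ) ^ k * (k ! : ℝ)) * x ^ k

theorem expHalfPartialSum_eq (l : ℕ) (x : ℝ) :
    expHalfPartialSum l x = ∑ k ∈ range l, (x / 2) ^ k / k ! := by
  refine sum_congr rfl fun k _ => ?_
  rw [div_pow]
  ring

theorem continuous_expHalfPartialSum (l : ℕ) : Continuous (expHalfPartialSum l) := by
  unfold expHalfPartialSum
  fun_prop

theorem one_le_expHalfPartialSum {l : ℕ} (hl : 1 ≤ l) {x : ℝ} (hx : 0 ≤ x) :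
    1 ≤ expHalfPartialSum l x := by
  have h := single_le_sum (f := fun k => 1 / ((2 : ℝ) ^ k * (k ! : ℝ)) * x ^ k)
    (fun k _ => by positivity) (mem_range.2 hl)
  rw [expHalfPartialSum]
  simpa using h

theorem expHalfPartialSum_monotoneOn (l : ℕ) : MonotoneOn (expHalfPartialSum l) (Set.Ici 0) := by
  intro x hx y _ hxy
  unfold expHalfPartialSum
  gcongr

theorem expHalfPartialSum_add_le (l : ℕ) {x u : ℝ} (hx : 0 ≤ x) (hu : 0 ≤ u) :
    expHalfPartialSum l (x + u) ≤ expHalfPartialSum l x * exp (u / 2) := by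
  simp only [expHalfPartialSum_eq, add_div]
  exact sum_range_add_pow_div_factorial_le (by positivity) (by positivity) l

theorem sum_range_sqrt_factorial_div_le_two (l : ℕ) :
    ∑ k ∈ range l, 1 / ((2 : ℝ) ^ k * (k ! : ℝ)) * √(k ! : ℝ) ≤ 2 := by
  refine le_trans (sum_le_sum fun k _ => ?_) (sum_geometric_two_le l)
  have hk : (1 : ℝ) ≤ k ! := Nat.one_le_cast.2 k.factorial_pos
  calc 1 / ((2 : ℝ) ^ k * (k ! : ℝ)) * √(k ! : ℝ)
      ≤ 1 / ((2 : ℝ) ^ k * (k ! : ℝ)) * (k ! : ℝ) := by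
        gcongr
        exact sqrt_le_self_iff.2 (Or.inr hk)
    _ = (1 / 2) ^ k := by
        rw [one_div_pow]
        field_simp

noncomputable def scaleRatio (m P t : ℝ) : ℝ := max (P / max t m) (max t m / m)

theorem one_le_scaleRatio {m : ℝ} (hm : 0 < m) (P t : ℝ) : 1 ≤ scaleRatio m P t :=
  le_max_of_le_right ((one_le_div hm).2 (le_max_right t m))

theorem continuous_scaleRatio {m : ℝ} (hm : 0 < m) (P : ℝ) : Continuous (scaleRatio m P) := by
  have hκ : Continuous fun t : ℝ => max t m := continuous_id.max continuous_const
  exact (continuous_const.div hκ fun t => (hm.trans_le (le_max_right t m)).ne').max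
    (hκ.div_const m)

theorem scaleRatio_le_mul_div {m P Λ t : ℝ} (hm : 0 < m) (hP : 0 ≤ P) (hΛ : 0 < Λ) (ht : Λ ≤ t) :
    scaleRatio m P t ≤ scaleRatio m P Λ * (t / Λ) := by
  have hκ : 0 < max Λ m := hm.trans_le (le_max_right Λ m)
  have hρ : 1 ≤ t / Λ := (one_le_div hΛ).2 ht
  have hM : 0 ≤ scaleRatio m P Λ := zero_le_one.trans (one_le_scaleRatio hm P Λ)
  have hκt : max t m ≤ t / Λ * max Λ m := by
    refine max_le ?_ ?_
    · calc t = t / Λ * Λ := by field_simp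
        _ ≤ t / Λ * max Λ m := by gcongr; exact le_max_left Λ m
    · exact (le_max_right Λ m).trans (le_mul_of_one_le_left hκ.le hρ)
  refine max_le ?_ ?_
  · calc P / max t m ≤ P / max Λ m := by gcongr
      _ ≤ scaleRatio m P Λ := le_max_left _ _
      _ ≤ scaleRatio m P Λ * (t / Λ) := le_mul_of_one_le_right hM hρ
  · calc max t m / m ≤ t / Λ * max Λ m / m := by gcongr
      _ = t / Λ * (max Λ m / m) := by ring
      _ ≤ t / Λ * scaleRatio m P Λ := by gcongr; exact le_max_right _ _
      _ = scaleRatio m P Λ * (t / Λ) := mul_comm _ _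

theorem log_scaleRatio_le {m P Λ t : ℝ} (hm : 0 < m) (hP : 0 ≤ P) (hΛ : 0 < Λ) (ht : Λ ≤ t) :
    log (scaleRatio m P t) ≤ log (scaleRatio m P Λ) + log (t / Λ) := by
  rw [← log_mul (zero_lt_one.trans_le (one_le_scaleRatio hm P Λ)).ne'
    (div_pos (hΛ.trans_le ht) hΛ).ne']
  exact log_le_log (zero_lt_one.trans_le (one_le_scaleRatio hm P t))
    (scaleRatio_le_mul_div hm hP hΛ ht)

theorem integral_sqrt_div_pow_le {A B Λ Λ₀ : ℝ} (hA : 0 ≤ A) (hB : 0 ≤ B) (hΛ : 0 < Λ)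
    (hΛΛ₀ : Λ ≤ Λ₀) {s : ℕ} (hs : 1 ≤ s) :
    ∫ t in Λ..Λ₀, (A * (t / Λ) ^ (1 / 2 : ℝ) + B) / t ^ (s + 1) ≤
      (2 * A + B) * ((Λ ^ s)⁻¹ / s) := by
  set r₁ : ℝ := 1 / 2 - ((s + 1 : ℕ) : ℝ)
  set r₂ : ℝ := -((s + 1 : ℕ) : ℝ)
  have h0 : (0 : ℝ) ∉ Set.uIcc Λ Λ₀ := Set.notMem_uIcc_of_lt hΛ (hΛ.trans_le hΛΛ₀)
  have hsplit : ∀ t ∈ Set.uIcc Λ Λ₀, (A * (t / Λ) ^ (1 / 2 : ℝ) + B) / t ^ (s + 1) =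
      A * Λ ^ (-(1 / 2) : ℝ) * t ^ r₁ + B * t ^ r₂ := by
    intro t ht
    have ht0 : 0 < t := hΛ.trans_le (Set.uIcc_of_le hΛΛ₀ ▸ ht).1
    rw [rpow_sub ht0, rpow_neg ht0.le, rpow_neg hΛ.le, rpow_natCast, div_rpow ht0.le hΛ.le]
    field_simp
  have hs₀ : (1 : ℝ) ≤ s := Nat.one_le_cast.2 hs
  have hr₁ : Λ ^ (-(1 / 2) : ℝ) * Λ ^ (r₁ + 1) = (Λ ^ s)⁻¹ := by
    rw [← rpow_add hΛ, ← rpow_natCast, ← rpow_neg hΛ.le]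
    congr 1
    push_cast [r₁]
    ring
  have hr₂ : Λ ^ (r₂ + 1) = (Λ ^ s)⁻¹ := by
    rw [← rpow_natCast, ← rpow_neg hΛ.le]
    congr 1
    push_cast [r₂]
    ring
  have hI₁ := integral_rpow_le_of_lt_neg_one hΛ hΛΛ₀ (r := r₁) (by push_cast [r₁]; linarith)
  have hI₂ := integral_rpow_le_of_lt_neg_one hΛ hΛΛ₀ (r := r₂) (by push_cast [r₂]; linarith)
  rw [integral_congr hsplit, integral_add ((intervalIntegrable_rpow (Or.inr h0)).const_mul _)
    ((intervalIntegrable_rpow (Or.inr h0)).const_mul _), integral_const_mul, integral_const_mul]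
  have hc₁ : -(r₁ + 1) = s - 1 / 2 := by push_cast [r₁]; ring
  have hc₂ : -(r₂ + 1) = s := by push_cast [r₂]; ring
  have hX : 0 ≤ (Λ ^ s)⁻¹ := by positivity
  have hhalf : (Λ ^ s)⁻¹ / (s - 1 / 2) ≤ 2 * ((Λ ^ s)⁻¹ / s) :=
    calc (Λ ^ s)⁻¹ / (s - 1 / 2) ≤ (Λ ^ s)⁻¹ / (s / 2) :=
          div_le_div_of_nonneg_left hX (by positivity) (by linarith)
      _ = 2 * ((Λ ^ s)⁻¹ / s) := by ring
  calc (A * Λ ^ (-(1 / 2) : ℝ) * ∫ t in Λ..Λ₀, t ^ r₁) + B * ∫ t in Λ..Λ₀, t ^ r₂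
      ≤ A * Λ ^ (-(1 / 2) : ℝ) * (Λ ^ (r₁ + 1) / -(r₁ + 1)) + B * (Λ ^ (r₂ + 1) / -(r₂ + 1)) := by
        gcongr
    _ = A * ((Λ ^ s)⁻¹ / (s - 1 / 2)) + B * ((Λ ^ s)⁻¹ / s) := by
        rw [hc₁, hc₂, hr₂, ← hr₁]
        ring
    _ ≤ (2 * A + B) * ((Λ ^ s)⁻¹ / s) := by
        nlinarith [mul_le_mul_of_nonneg_left hhalf hA]

theorem sum_integral_log_pow_div_pow_le {F : ℝ → ℝ} {Λ Λ₀ L : ℝ} (hΛ : 0 < Λ) (hΛΛ₀ : Λ ≤ Λ₀)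
    {s l : ℕ} (hs : 1 ≤ s) (hl : 1 ≤ l) (hL : 0 ≤ L) (hF : ContinuousOn F (Set.Icc Λ Λ₀))
    (hF₀ : ∀ t ∈ Set.Icc Λ Λ₀, 0 ≤ F t) (hFL : ∀ t ∈ Set.Icc Λ Λ₀, F t ≤ L + log (t / Λ)) :
    ∑ k ∈ range l, 1 / ((2 : ℝ) ^ k * (k ! : ℝ)) *
        ∫ t in Λ..Λ₀, (F t ^ k + √(k ! : ℝ)) / t ^ (s + 1) ≤
      5 * ((Λ ^ s)⁻¹ / s) * expHalfPartialSum l L := by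
  set S := expHalfPartialSum l L
  set c := ∑ k ∈ range l, 1 / ((2 : ℝ) ^ k * (k ! : ℝ)) * √(k ! : ℝ)
  have hS : 1 ≤ S := one_le_expHalfPartialSum hl hL
  have hswap : ∑ k ∈ range l, 1 / ((2 : ℝ) ^ k * (k ! : ℝ)) *
        ∫ t in Λ..Λ₀, (F t ^ k + √(k ! : ℝ)) / t ^ (s + 1) =
      ∫ t in Λ..Λ₀, (expHalfPartialSum l (F t) + c) / t ^ (s + 1) := by
    simp_rw [← integral_const_mul]
    rw [← integral_finsetSum fun k _ => (intervalIntegrable_div_pow_of_continuousOn hΛ hΛΛ₀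
      (g := fun t => F t ^ k + √(k ! : ℝ)) ((hF.pow k).add continuousOn_const) (s + 1)).const_mul _]
    refine integral_congr fun t _ => ?_
    simp only [expHalfPartialSum, c, ← sum_add_distrib, sum_div]
    exact sum_congr rfl fun k _ => by ring
  have hpointwise : ∀ t ∈ Set.Icc Λ Λ₀,
      expHalfPartialSum l (F t) + c ≤ S * (t / Λ) ^ (1 / 2 : ℝ) + 2 := by
    intro t ht
    have hρ : 0 < t / Λ := div_pos (hΛ.trans_le ht.1) hΛ
    have hlog : 0 ≤ log (t / Λ) := log_nonneg ((one_le_div hΛ).2 ht.1)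
    refine add_le_add ?_ (sum_range_sqrt_factorial_div_le_two l)
    calc expHalfPartialSum l (F t)
        ≤ expHalfPartialSum l (L + log (t / Λ)) :=
          expHalfPartialSum_monotoneOn l (hF₀ t ht) (by positivity : 0 ≤ L + log (t / Λ))
            (hFL t ht)
      _ ≤ S * exp (log (t / Λ) / 2) := expHalfPartialSum_add_le l hL hlog
      _ = S * (t / Λ) ^ (1 / 2 : ℝ) := by rw [rpow_def_of_pos hρ, mul_one_div]
  have hX : 0 ≤ (Λ ^ s)⁻¹ / s := by positivity
  calc _ = ∫ t in Λ..Λ₀, (expHalfPartialSum l (F t) + c) / t ^ (s + 1) := hswap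
    _ ≤ ∫ t in Λ..Λ₀, (S * (t / Λ) ^ (1 / 2 : ℝ) + 2) / t ^ (s + 1) := by
        refine integral_mono_on hΛΛ₀ ?_ ?_ fun t ht => ?_
        · exact intervalIntegrable_div_pow_of_continuousOn hΛ hΛΛ₀
            (g := fun t => expHalfPartialSum l (F t) + c)
            (((continuous_expHalfPartialSum l).comp_continuousOn hF).add continuousOn_const) _
        · exact intervalIntegrable_div_pow_of_continuousOn hΛ hΛΛ₀
            (g := fun t => S * (t / Λ) ^ (1 / 2 : ℝ) + 2) (by fun_prop (disch := norm_num)) _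
        · have ht₀ : 0 < t := hΛ.trans_le ht.1
          exact div_le_div_of_nonneg_right (hpointwise t ht) (by positivity)
    _ ≤ (2 * S + 2) * ((Λ ^ s)⁻¹ / s) :=
        integral_sqrt_div_pow_le (by positivity) zero_le_two hΛ hΛΛ₀ hs
    _ ≤ 5 * ((Λ ^ s)⁻¹ / s) * S := by nlinarith

/-- Flow-parameter integration estimate (eq. (log) of the paper): for `0 < Λ ≤ Λ₀`,
`m > 0`, integers `s ≥ 1`, `l ≥ 1` and `P ≥ 0`, with `κ' = max(Λ',m)`,
`κ = max(Λ,m)`: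
`Σ_{λ=0}^{l−1} (1/(2^λ λ!)) ∫_Λ^{Λ₀} Λ'^{−s−1}[log^λ(max(P/κ',κ'/m)) + √(λ!)] dΛ'
  ≤ 5 (Λ^{−s}/s) Σ_{λ=0}^{l−1} (1/(2^λ λ!)) log^λ(max(P/κ,κ/m))`. -/
theorem stmt_11 (m Λ Λ₀ : ℝ) (hm : 0 < m) (hΛ : 0 < Λ) (hΛΛ₀ : Λ ≤ Λ₀)
    (s l : ℕ) (hs : 1 ≤ s) (hl : 1 ≤ l) (P : ℝ) (hP : 0 ≤ P) :
    ∑ lam ∈ Finset.range l,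
        1 / ((2 : ℝ) ^ lam * (Nat.factorial lam : ℝ)) *
          ∫ t in Λ..Λ₀,
            ((Real.log (max (P / max t m) (max t m / m))) ^ lam +
                Real.sqrt (Nat.factorial lam)) / t ^ (s + 1) ≤
      5 * ((Λ ^ s)⁻¹ / (s : ℝ)) *
        ∑ lam ∈ Finset.range l,
          1 / ((2 : ℝ) ^ lam * (Nat.factorial lam : ℝ)) *
            (Real.log (max (P / max Λ m) (max Λ m / m))) ^ lam := by
  have hlog_nonneg : ∀ t, 0 ≤ log (scaleRatio m P t) := fun t =>
    log_nonneg (one_le_scaleRatio hm P t)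
  exact sum_integral_log_pow_div_pow_le (F := fun t => log (scaleRatio m P t)) hΛ hΛΛ₀ hs hl
    (hlog_nonneg Λ)
    ((continuous_scaleRatio hm P).continuousOn.log fun t _ =>
      (zero_lt_one.trans_le (one_le_scaleRatio hm P t)).ne')
    (fun t _ => hlog_nonneg t) (fun t ht => log_scaleRatio_le hm hP hΛ ht.1)
end

section
/- Let Λ > 0, m > 0, set κ := max(Λ, m), let λ ∈ ℕ, and let p₁, …, p_N ∈ ℝ⁴. For a finite tuple of vectors define |q⃗|_M := max over subsets J ⊆ {1,…,M} of ‖Σ_{i∈J} q_i‖. Then (2π)^{−4} ∫_{ℝ⁴} exp(−‖x‖²/2) · log^λ( max( |(p₁,…,p_N, Λx, −Λx)|_{N+2} / κ , κ/m ) ) d⁴x ≤ log^λ( max( |(p₁,…,p_N)|_N / κ , κ/m ) ) + √(λ!). -/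
/-!
Appending `Λx` and `-Λx` moves every partial sum by at most `Λ‖x‖ ≤ κ‖x‖`, so the argument of the
logarithm under the integral is at most `A + ‖x‖`, where `A = max(|p⃗|_N/κ, κ/m) ≥ 1`. For any
`T > 0` with `A ≤ eᵀ` and `λ ≤ T eᵀ` this gives
`log^λ(A + ‖x‖) ≤ (T + ‖x‖e⁻ᵀ)^λ ≤ T^λ e^{‖x‖}`, and the Gaussian absorbs the exponential:
`(2π)⁻⁴ ∫ e^{-‖x‖²/2 + ‖x‖} ≤ e/π² ≤ 1`. The choice `T = max(log A, t)` with `t = √max(1, λ/e)`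
makes `λ ≤ e T² ≤ T eᵀ` automatic, and `t^λ ≤ √(λ!)` because `λ! ≥ (λ/e)^λ`.
-/

/-- `|q⃗|_M`: the maximum over all subsets `J ⊆ {1,…,M}` of `‖Σ_{i ∈ J} q_i‖`
(the empty subset contributing 0). -/
noncomputable def momMax {M : ℕ} (q : Fin M → EuclideanSpace ℝ (Fin 4)) : ℝ :=
  Finset.univ.sup' Finset.univ_nonempty fun J : Finset (Fin M) => ‖∑ i ∈ J, q i‖

open MeasureTheory Real Finset

lemma norm_sum_le_momMax {M : ℕ} (q : Fin M → EuclideanSpace ℝ (Fin 4)) (J : Finset (Fin M)) :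
    ‖∑ i ∈ J, q i‖ ≤ momMax q :=
  le_sup' (fun J : Finset (Fin M) => ‖∑ i ∈ J, q i‖) (mem_univ J)

lemma momMax_append_neg_le {N : ℕ} (p : Fin N → EuclideanSpace ℝ (Fin 4))
    (a : EuclideanSpace ℝ (Fin 4)) :
    momMax (Fin.append p ![a, -a]) ≤ momMax p + ‖a‖ := by
  classical
  refine sup'_le _ _ fun J _ => ?_
  have hsplit : ∑ i ∈ J, Fin.append p ![a, -a] i =
      ∑ j ∈ univ.filter (fun j => Fin.castAdd 2 j ∈ J), p j +
        ((if Fin.natAdd N 0 ∈ J then a else 0) + if Fin.natAdd N 1 ∈ J then -a else 0) := by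
    rw [← univ_inter J, ← sum_ite_mem, Fin.sum_univ_add, sum_filter, Fin.sum_univ_two]
    simp
  have htail : ‖(if Fin.natAdd N 0 ∈ J then a else 0) +
      if Fin.natAdd N 1 ∈ J then -a else 0‖ ≤ ‖a‖ := by
    split_ifs <;> simp
  rw [hsplit]
  exact (norm_add_le _ _).trans (add_le_add (norm_sum_le_momMax p _) htail)

lemma max_momMax_append_div_le {N : ℕ} {Λ m : ℝ} (hΛ : 0 < Λ)
    (p : Fin N → EuclideanSpace ℝ (Fin 4)) (x : EuclideanSpace ℝ (Fin 4)) :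
    max (momMax (Fin.append p ![Λ • x, -(Λ • x)]) / max Λ m) (max Λ m / m) ≤
      max (momMax p / max Λ m) (max Λ m / m) + ‖x‖ := by
  have hκ : 0 < max Λ m := lt_max_of_lt_left hΛ
  have hΛκ : Λ / max Λ m ≤ 1 := div_le_one_of_le₀ (le_max_left Λ m) hκ.le
  refine max_le ?_ (le_add_of_le_of_nonneg (le_max_right _ _) (norm_nonneg x))
  calc momMax (Fin.append p ![Λ • x, -(Λ • x)]) / max Λ m
      ≤ (momMax p + Λ * ‖x‖) / max Λ m := by
        gcongr
        simpa [norm_smul, abs_of_pos hΛ] using momMax_append_neg_le p (Λ • x)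
    _ = momMax p / max Λ m + Λ / max Λ m * ‖x‖ := by ring
    _ ≤ max (momMax p / max Λ m) (max Λ m / m) + ‖x‖ := by
        gcongr
        · exact le_max_left _ _
        · exact mul_le_of_le_one_left (norm_nonneg x) hΛκ

lemma log_le_add_div_exp {y s T : ℝ} (hy : 0 < y) (hyT : y ≤ exp T + s) :
    log y ≤ T + s / exp T := by
  rw [log_le_iff_le_exp hy, exp_add]
  calc y ≤ exp T * (s / exp T + 1) := by rw [mul_add, mul_div_cancel₀ _ (exp_pos T).ne']; linarith
    _ ≤ exp T * exp (s / exp T) := by gcongr; exact add_one_le_exp _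

lemma add_pow_le_pow_mul_exp {t u : ℝ} (ht : 0 < t) (hu : 0 ≤ u) (n : ℕ) :
    (t + u) ^ n ≤ t ^ n * exp (n * u / t) := by
  calc (t + u) ^ n ≤ (t * exp (u / t)) ^ n := by
        gcongr
        calc t + u = t * (u / t + 1) := by field_simp; ring
          _ ≤ t * exp (u / t) := by gcongr; exact add_one_le_exp _
    _ = t ^ n * exp (n * u / t) := by rw [mul_pow, ← exp_nat_mul, mul_div_assoc]

lemma log_pow_le_pow_mul_exp {y s T : ℝ} {n : ℕ} (hy : 1 ≤ y) (hs : 0 ≤ s)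
    (hyT : y ≤ exp T + s) (hT : 0 < T) (hn : n ≤ T * exp T) :
    log y ^ n ≤ T ^ n * exp s := by
  calc log y ^ n ≤ (T + s / exp T) ^ n :=
        pow_le_pow_left₀ (log_nonneg hy) (log_le_add_div_exp (by linarith) hyT) n
    _ ≤ T ^ n * exp (n * (s / exp T) / T) := add_pow_le_pow_mul_exp hT (by positivity) n
    _ ≤ T ^ n * exp s := by
        gcongr
        rw [div_le_iff₀ hT, mul_div_assoc', div_le_iff₀ (exp_pos T)]
        nlinarith

lemma exp_neg_sq_div_two_mul_log_pow_le {y s T : ℝ} {n : ℕ} (hy : 1 ≤ y) (hs : 0 ≤ s)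
    (hyT : y ≤ exp T + s) (hT : 0 < T) (hn : n ≤ T * exp T) :
    exp (-s ^ 2 / 2) * log y ^ n ≤ T ^ n * exp 1 * exp (-(1 / 4) * s ^ 2) := by
  have hgauss : exp (-s ^ 2 / 2) * exp s ≤ exp 1 * exp (-(1 / 4) * s ^ 2) := by
    rw [← exp_add, ← exp_add]
    exact exp_le_exp.mpr (by nlinarith [sq_nonneg (s / 2 - 1)])
  calc exp (-s ^ 2 / 2) * log y ^ n ≤ exp (-s ^ 2 / 2) * (T ^ n * exp s) := by
        gcongr; exact log_pow_le_pow_mul_exp hy hs hyT hT hn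
    _ = T ^ n * (exp (-s ^ 2 / 2) * exp s) := by ring
    _ ≤ T ^ n * (exp 1 * exp (-(1 / 4) * s ^ 2)) := by gcongr
    _ = T ^ n * exp 1 * exp (-(1 / 4) * s ^ 2) := by ring

lemma le_mul_exp_of_div_exp_one_le_sq {a T : ℝ} (hT : 0 ≤ T) (h : a / exp 1 ≤ T ^ 2) :
    a ≤ T * exp T := by
  have hexp : exp 1 * T ≤ exp T := by
    calc exp 1 * T ≤ exp 1 * exp (T - 1) := by
          gcongr; linarith [add_one_le_exp (T - 1)]
      _ = exp T := by rw [← exp_add, add_sub_cancel]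
  rw [div_le_iff₀ (exp_pos 1)] at h
  nlinarith

lemma max_pow_le_add_pow {a b : ℝ} (ha : 0 ≤ a) (hb : 0 ≤ b) (n : ℕ) :
    max a b ^ n ≤ a ^ n + b ^ n := by
  rcases le_total a b with h | h
  · rw [max_eq_right h]; exact le_add_of_nonneg_left (pow_nonneg ha n)
  · rw [max_eq_left h]; exact le_add_of_nonneg_right (pow_nonneg hb n)

lemma sqrt_max_one_div_exp_one_pow_le_sqrt_factorial (n : ℕ) :
    √(max 1 (n / exp 1)) ^ n ≤ √(n.factorial) := by
  rw [le_sqrt (by positivity) (by positivity), ← pow_mul, mul_comm, pow_mul,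
    sq_sqrt (by positivity)]
  rcases le_total 1 ((n : ℝ) / exp 1) with h | h
  · rw [max_eq_right h, div_pow, ← exp_nat_mul, mul_one, div_le_iff₀ (exp_pos _)]
    have := pow_div_factorial_le_exp (n : ℝ) n.cast_nonneg n
    rw [div_le_iff₀ (by positivity)] at this
    linarith
  · rw [max_eq_left h, one_pow]
    exact Nat.one_le_cast.mpr n.factorial_pos

lemma integral_le_mul_of_le_mul_gaussian {V : Type*} [NormedAddCommGroup V]
    [InnerProductSpace ℝ V] [FiniteDimensional ℝ V] [MeasurableSpace V] [BorelSpace V]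
    {f : V → ℝ} {b c : ℝ} (hb : 0 < b) (hf : 0 ≤ f) (hfc : ∀ x, f x ≤ c * exp (-b * ‖x‖ ^ 2)) :
    ∫ x, f x ≤ c * (π / b) ^ (Module.finrank ℝ V / 2 : ℝ) := by
  have hgauss := GaussianFourier.integral_rexp_neg_mul_sq_norm (V := V) hb
  have hint : Integrable fun x : V => exp (-b * ‖x‖ ^ 2) :=
    .of_integral_ne_zero (by rw [hgauss]; positivity)
  calc ∫ x, f x ≤ ∫ x, c * exp (-b * ‖x‖ ^ 2) :=
        integral_mono_of_nonneg (.of_forall hf) (hint.const_mul c) (.of_forall hfc)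
    _ = c * (π / b) ^ (Module.finrank ℝ V / 2 : ℝ) := by rw [integral_const_mul, hgauss]

lemma inv_two_pi_pow_four_mul_integral_le {f : EuclideanSpace ℝ (Fin 4) → ℝ} {c : ℝ}
    (hf : 0 ≤ f) (hfc : ∀ x, f x ≤ c * exp (-(1 / 4) * ‖x‖ ^ 2)) :
    ((2 * π) ^ 4)⁻¹ * ∫ x, f x ≤ c / π ^ 2 := by
  have h := integral_le_mul_of_le_mul_gaussian (by norm_num) hf hfc
  rw [finrank_euclideanSpace_fin, show ((4 : ℕ) / 2 : ℝ) = (2 : ℕ) by norm_num,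
    rpow_natCast] at h
  calc ((2 * π) ^ 4)⁻¹ * ∫ x, f x ≤ ((2 * π) ^ 4)⁻¹ * (c * (π / (1 / 4)) ^ 2) := by gcongr
    _ = c / π ^ 2 := by field_simp; ring

/-- Gaussian loop-momentum integration estimate (eq. (momint) of the paper):
with `κ = max(Λ,m)`, the rescaled loop integral
`(2π)^{−4} ∫ exp(−‖x‖²/2) log^λ(max(|(p⃗,Λx,−Λx)|_{N+2}/κ, κ/m)) d⁴x`
is at most `log^λ(max(|p⃗|_N/κ, κ/m)) + √(λ!)`. -/
theorem stmt_12 (Λ m : ℝ) (hΛ : 0 < Λ) (hm : 0 < m) (lam N : ℕ)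
    (p : Fin N → EuclideanSpace ℝ (Fin 4)) :
    ((2 * Real.pi) ^ 4)⁻¹ *
        ∫ x : EuclideanSpace ℝ (Fin 4),
          Real.exp (-‖x‖ ^ 2 / 2) *
            (Real.log (max (momMax (Fin.append p ![Λ • x, -(Λ • x)]) / max Λ m)
                (max Λ m / m))) ^ lam ≤
      (Real.log (max (momMax p / max Λ m) (max Λ m / m))) ^ lam +
        Real.sqrt (Nat.factorial lam) := by
  set A := max (momMax p / max Λ m) (max Λ m / m)
  set t := √(max 1 (lam / exp 1))
  set T := max (log A) t
  have hκm : 1 ≤ max Λ m / m := (one_le_div hm).mpr (le_max_right Λ m)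
  have hA : 1 ≤ A := hκm.trans (le_max_right _ _)
  have hAT : A ≤ exp T := (le_exp_log A).trans (exp_le_exp.mpr (le_max_left _ _))
  have ht : 1 ≤ t := one_le_sqrt.mpr (le_max_left _ _)
  have hT : 0 < T := zero_lt_one.trans_le (ht.trans (le_max_right _ _))
  have hlamT : (lam : ℝ) ≤ T * exp T := by
    refine le_mul_exp_of_div_exp_one_le_sq hT.le ((le_max_right 1 _).trans ?_)
    rw [← sq_sqrt (zero_le_one.trans (le_max_left 1 _))]
    gcongr
    exact le_max_right _ _
  have hy : ∀ x : EuclideanSpace ℝ (Fin 4),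
      1 ≤ max (momMax (Fin.append p ![Λ • x, -(Λ • x)]) / max Λ m) (max Λ m / m) :=
    fun x => hκm.trans (le_max_right _ _)
  calc _ ≤ T ^ lam * exp 1 / π ^ 2 :=
        inv_two_pi_pow_four_mul_integral_le (fun x => by have := log_nonneg (hy x); positivity)
          fun x => exp_neg_sq_div_two_mul_log_pow_le (hy x) (norm_nonneg x)
            ((max_momMax_append_div_le hΛ p x).trans (add_le_add_left hAT ‖x‖)) hT hlamT
    _ ≤ T ^ lam := by
        rw [mul_div_assoc]
        refine mul_le_of_le_one_right (by positivity) ((div_le_one (by positivity)).mpr ?_)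
        nlinarith [exp_one_lt_three, pi_gt_three]
    _ ≤ log A ^ lam + t ^ lam := max_pow_le_add_pow (log_nonneg hA) (by positivity) lam
    _ ≤ _ := by gcongr; exact sqrt_max_one_div_exp_one_pow_le_sqrt_factorial lam
end

section
/- Let m > 0 and let s ∈ ℤ be an integer. Then ∫₀^m t^{−s−1} · exp(−m²/t²) dt ≤ m^{−s} · √( (max(s,0))! ). -/
/-!
Since `exp (-x) ≤ k! / x ^ k` for `x > 0`, the integrand is at most `k! m^{-2k} t^{2k-s-1}` on
`(0, m]`; for `2k > s` this majorant is integrable at `0` and integrates to `m^{-s} k! / (2k - s)`.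
Taking `k = 0` when `s < 0`, and `k = ⌊s/2⌋ + 1` (so that `2k - s ∈ {1, 2}`) otherwise, the constant
`k! / (2k - s)` is at most `√(s!)` by the elementary bounds `((j+1)!)² ≤ (2j+1)!` and
`((j+1)!)² ≤ 4 (2j)!`.
-/

open MeasureTheory Real Set Nat

-- No integrability of `f` is needed: a nonintegrable `f` has integral `0`.
theorem intervalIntegral.integral_mono_on_of_nonneg {f g : ℝ → ℝ} {a b : ℝ} (hab : a ≤ b)
    (hg : IntervalIntegrable g volume a b) (hf : ∀ x ∈ Ioc a b, 0 ≤ f x)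
    (hfg : ∀ x ∈ Ioc a b, f x ≤ g x) :
    ∫ x in a..b, f x ≤ ∫ x in a..b, g x := by
  rw [intervalIntegral.integral_of_le hab, intervalIntegral.integral_of_le hab]
  exact integral_mono_of_nonneg (ae_restrict_of_forall_mem measurableSet_Ioc hf) hg.1
    (ae_restrict_of_forall_mem measurableSet_Ioc hfg)

theorem sq_factorial_succ_le_factorial_two_mul_add_one (j : ℕ) : (j + 1)! ^ 2 ≤ (2 * j + 1)! := by
  induction j with
  | zero => rfl
  | succ j ih =>
    rw [show 2 * (j + 1) + 1 = 2 * j + 1 + 1 + 1 by ring, factorial_succ (2 * j + 1 + 1),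
      factorial_succ (2 * j + 1), factorial_succ (j + 1), mul_pow, ← mul_assoc]
    exact Nat.mul_le_mul (by nlinarith) ih

theorem sq_factorial_succ_le_four_mul_factorial_two_mul (j : ℕ) : (j + 1)! ^ 2 ≤ 4 * (2 * j)! := by
  induction j with
  | zero => decide
  | succ j ih =>
    rcases j with _ | j
    · decide
    rw [show 2 * (j + 1 + 1) = 2 * (j + 1) + 1 + 1 by ring, factorial_succ (2 * (j + 1) + 1),
      factorial_succ (2 * (j + 1)), factorial_succ (j + 1 + 1), mul_pow]
    calc (j + 1 + 1 + 1) ^ 2 * (j + 1 + 1)! ^ 2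
        ≤ ((2 * (j + 1) + 1 + 1) * (2 * (j + 1) + 1)) * (4 * (2 * (j + 1))!) :=
          Nat.mul_le_mul (by nlinarith) ih
      _ = _ := by ring

theorem le_mul_sqrt_of_sq_le_sq_mul {a b c : ℝ} (hc : 0 ≤ c) (hb : 0 ≤ b) (h : a ^ 2 ≤ c ^ 2 * b) :
    a ≤ c * √b := by
  rw [← Real.sqrt_sq hc, ← Real.sqrt_mul' _ hb]
  exact Real.le_sqrt_of_sq_le h

theorem exists_factorial_le_mul_sqrt_factorial (s : ℤ) :
    ∃ k : ℕ, s < 2 * k ∧ (k ! : ℝ) ≤ (2 * k - s) * √(s.toNat !) := by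
  rcases lt_or_ge s 0 with hs | hs
  · refine ⟨0, by omega, ?_⟩
    have : (s : ℝ) ≤ -1 := by exact_mod_cast Int.le_sub_one_of_lt hs
    simp only [factorial_zero, cast_one, CharP.cast_eq_zero, mul_zero, zero_sub,
      Int.toNat_of_nonpos hs.le, Real.sqrt_one, mul_one]
    linarith
  obtain ⟨n, rfl⟩ := Int.eq_ofNat_of_zero_le hs
  rcases Nat.even_or_odd' n with ⟨j, rfl | rfl⟩
  · refine ⟨j + 1, by omega, ?_⟩
    have hc : 2 * ((j + 1 : ℕ) : ℝ) - ((2 * j : ℕ) : ℤ) = 2 := by push_cast; ring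
    rw [hc, Int.toNat_natCast]
    exact le_mul_sqrt_of_sq_le_sq_mul zero_le_two (by positivity)
      (by exact_mod_cast sq_factorial_succ_le_four_mul_factorial_two_mul j)
  · refine ⟨j + 1, by omega, ?_⟩
    have hc : 2 * ((j + 1 : ℕ) : ℝ) - ((2 * j + 1 : ℕ) : ℤ) = 1 := by push_cast; ring
    rw [hc, Int.toNat_natCast]
    exact le_mul_sqrt_of_sq_le_sq_mul zero_le_one (by positivity)
      (by rw [one_pow, one_mul]; exact_mod_cast sq_factorial_succ_le_factorial_two_mul_add_one j)

theorem exp_neg_le_factorial_div_pow {x : ℝ} (hx : 0 < x) (k : ℕ) : exp (-x) ≤ k ! / x ^ k := by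
  rw [le_div_iff₀ (by positivity), exp_neg, inv_mul_le_iff₀ (exp_pos x), ← div_le_iff₀ (by positivity)]
  exact pow_div_factorial_le_exp _ hx.le k

theorem zpow_mul_exp_neg_sq_div_sq_le {m t : ℝ} (hm : m ≠ 0) (ht : 0 < t) (s : ℤ) (k : ℕ) :
    t ^ (-s - 1) * exp (-m ^ 2 / t ^ 2) ≤ k ! / m ^ (2 * k) * t ^ (2 * k - s - 1) := by
  have hexp := exp_neg_le_factorial_div_pow (x := m ^ 2 / t ^ 2) (by positivity) k
  calc t ^ (-s - 1) * exp (-m ^ 2 / t ^ 2) ≤ t ^ (-s - 1) * (k ! / (m ^ 2 / t ^ 2) ^ k) := by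
        rw [neg_div]; gcongr
    _ = k ! / m ^ (2 * k) * t ^ (2 * k - s - 1) := by
        rw [show (2 * k - s - 1 : ℤ) = (-s - 1) + (2 * k : ℕ) by push_cast; ring,
          zpow_add₀ ht.ne', zpow_natCast, div_pow, ← pow_mul, ← pow_mul]
        field_simp

theorem integral_zpow_mul_exp_neg_sq_div_sq_le {m : ℝ} (hm : 0 < m) {s : ℤ} {k : ℕ}
    (hk : s < 2 * k) :
    ∫ t in 0..m, t ^ (-s - 1) * exp (-m ^ 2 / t ^ 2) ≤ m ^ (-s) * (k ! / (2 * k - s)) := by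
  have hr : 0 ≤ 2 * (k : ℤ) - s - 1 := by omega
  calc ∫ t in 0..m, t ^ (-s - 1) * exp (-m ^ 2 / t ^ 2)
      ≤ ∫ t in 0..m, k ! / m ^ (2 * k) * t ^ (2 * k - s - 1) :=
        intervalIntegral.integral_mono_on_of_nonneg hm.le
          ((intervalIntegral.intervalIntegrable_zpow (Or.inl hr)).const_mul _)
          (fun t ht => by have := ht.1; positivity)
          (fun t ht => zpow_mul_exp_neg_sq_div_sq_le hm.ne' ht.1 s k)
    _ = k ! / m ^ (2 * k) * (m ^ (2 * k - s) / (2 * k - s)) := by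
        rw [intervalIntegral.integral_const_mul, integral_zpow (Or.inl hr),
          zero_zpow _ (by omega), sub_zero]
        push_cast
        ring_nf
    _ = m ^ (-s) * (k ! / (2 * k - s)) := by
        rw [show 2 * (k : ℤ) - s = (2 * k : ℕ) + -s by push_cast; ring, zpow_add₀ hm.ne', zpow_natCast]
        field_simp

/-- For `m > 0` and an integer `s`:
`∫₀^m t^{−s−1} exp(−m²/t²) dt ≤ m^{−s} √((max(s,0))!)`. -/
theorem stmt_13 (m : ℝ) (hm : 0 < m) (s : ℤ) :
    ∫ t in (0 : ℝ)..m, t ^ (-s - 1) * Real.exp (-m ^ 2 / t ^ 2) ≤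
      m ^ (-s) * Real.sqrt (Nat.factorial s.toNat) := by
  obtain ⟨k, hsk, hk⟩ := exists_factorial_le_mul_sqrt_factorial s
  have hpos : (0 : ℝ) < 2 * k - s := sub_pos.mpr (by exact_mod_cast hsk)
  calc ∫ t in (0 : ℝ)..m, t ^ (-s - 1) * exp (-m ^ 2 / t ^ 2)
      ≤ m ^ (-s) * (k ! / (2 * k - s)) := integral_zpow_mul_exp_neg_sq_div_sq_le hm hsk
    _ ≤ m ^ (-s) * √(s.toNat !) := by
      gcongr
      exact (div_le_iff₀' hpos).mpr hk
end
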